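/- arXiv:1604.00499 — 8 statements merged into one kernel-verified Lean document; each statement's English description precedes it below -/
import Mathlib

section
/- Let A = ℂ³ act diagonally on H = ℂ³ and let D be a real symmetric 3×3 matrix with zero diagonal and entries D₁₂, D₁₃, D₂₃ all nonzero. Then the spectral distance between pure states δ₁ and δ₂ is d(1,2) = sqrt( (D₁₃² + D₂₃²) / (D₁₂²D₁₃² + D₁₂²D₂₃² + D₂₃²D₁₃²) ). -/
open scoped ENNReal

/-- The Dirac operator of a three-point space: real symmetric with zero diagonal. -/
noncomputable def threePtDirac (D12 D13 D23 : ℝ) : Matrix (Fin 3) (Fin 3) ℂ :=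
  !![0, (D12 : ℂ), (D13 : ℂ); (D12 : ℂ), 0, (D23 : ℂ); (D13 : ℂ), (D23 : ℂ), 0]

/-!
The commutator `[D, diag z]` is the complex skew-symmetric matrix with entries
`a = D₁₂ (z₂ - z₁)`, `b = D₁₃ (z₃ - z₁)`, `c = D₂₃ (z₃ - z₂)`. It acts as a cross product, so by
Lagrange's identity its operator norm is `√(|a|² + |b|² + |c|²)`. The Lipschitz condition thus reads
`D₁₂² p² + D₁₃² q² + D₂₃² r² ≤ 1` for the side lengths `p, q, r` of the triangle `z₁ z₂ z₃`, and
maximizing `p` subject to it and to `p ≤ q + r` is a Cauchy–Schwarz argument, with equality for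
collinear points with `q : r = D₂₃² : D₁₃²`.
-/

open ComplexConjugate

def skewMatrix3 {R : Type*} [Zero R] [Neg R] (a b c : R) : Matrix (Fin 3) (Fin 3) R :=
  !![0, a, b; -a, 0, c; -b, -c, 0]

theorem threePtDirac_commutator_diagonal (D12 D13 D23 : ℝ) (z : Fin 3 → ℂ) :
    threePtDirac D12 D13 D23 * Matrix.diagonal z - Matrix.diagonal z * threePtDirac D12 D13 D23
      = skewMatrix3 (D12 * (z 1 - z 0)) (D13 * (z 2 - z 0)) (D23 * (z 2 - z 1)) := by
  ext i j
  rw [Matrix.sub_apply, Matrix.mul_diagonal, Matrix.diagonal_mul]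
  fin_cases i <;> fin_cases j <;> simp [threePtDirac, skewMatrix3] <;> ring

/-- Lagrange's identity: `skewMatrix3 a b c` acts as a cross product. -/
theorem sq_norm_skewMatrix3_apply_add (a b c : ℂ) (x : EuclideanSpace ℂ (Fin 3)) :
    ‖Matrix.toEuclideanCLM (𝕜 := ℂ) (skewMatrix3 a b c) x‖ ^ 2
        + ‖conj c * x 0 - conj b * x 1 + conj a * x 2‖ ^ 2
      = (‖a‖ ^ 2 + ‖b‖ ^ 2 + ‖c‖ ^ 2) * ‖x‖ ^ 2 := by
  simp only [EuclideanSpace.norm_sq_eq, Fin.sum_univ_three, Matrix.ofLp_toEuclideanCLM,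
    Matrix.mulVec, dotProduct, skewMatrix3]
  simp only [Matrix.of_apply, Matrix.cons_val', Matrix.cons_val_zero, Matrix.cons_val_one,
    Matrix.cons_val, Matrix.cons_val_fin_one, Complex.sq_norm, Complex.normSq_apply,
    Complex.add_re, Complex.add_im, Complex.sub_re, Complex.sub_im, Complex.mul_re, Complex.mul_im,
    Complex.neg_re, Complex.neg_im, Complex.conj_re, Complex.conj_im, Complex.zero_re,
    Complex.zero_im]
  ring

theorem norm_toEuclideanCLM_skewMatrix3 (a b c : ℂ) :
    ‖Matrix.toEuclideanCLM (𝕜 := ℂ) (skewMatrix3 a b c)‖ = √(‖a‖ ^ 2 + ‖b‖ ^ 2 + ‖c‖ ^ 2) := by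
  set N := Matrix.toEuclideanCLM (𝕜 := ℂ) (skewMatrix3 a b c)
  set S := ‖a‖ ^ 2 + ‖b‖ ^ 2 + ‖c‖ ^ 2
  apply le_antisymm
  · refine N.opNorm_le_bound (Real.sqrt_nonneg _) fun x ↦ ?_
    refine (pow_le_pow_iff_left₀ (norm_nonneg _) (by positivity) two_ne_zero).mp ?_
    rw [mul_pow, Real.sq_sqrt (by positivity), ← sq_norm_skewMatrix3_apply_add a b c x]
    exact le_add_of_nonneg_right (sq_nonneg _)
  · have h_kernel (x : EuclideanSpace ℂ (Fin 3))
        (hx : conj c * x 0 - conj b * x 1 + conj a * x 2 = 0) :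
        S * ‖x‖ ^ 2 ≤ ‖N‖ ^ 2 * ‖x‖ ^ 2 := by
      have := sq_norm_skewMatrix3_apply_add a b c x
      rw [hx, norm_zero, zero_pow two_ne_zero, add_zero] at this
      rw [← this, ← mul_pow]
      exact pow_le_pow_left₀ (norm_nonneg _) (N.le_opNorm x) 2
    -- both witnesses kill the correction term in Lagrange's identity, and their squared norms
    -- `‖a‖² + ‖c‖²` and `‖b‖² + ‖c‖²` cannot both vanish unless `S = 0`
    have hx := h_kernel !₂[conj a, 0, -conj c] (by
      simp only [Matrix.cons_val_zero, Matrix.cons_val_one, Matrix.cons_val]; ring)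
    have hy := h_kernel !₂[conj b, conj c, 0] (by
      simp only [Matrix.cons_val_zero, Matrix.cons_val_one, Matrix.cons_val]; ring)
    simp only [EuclideanSpace.norm_sq_eq, Fin.sum_univ_three, Matrix.cons_val_zero,
      Matrix.cons_val_one, Matrix.cons_val, RCLike.norm_conj, norm_neg, norm_zero] at hx hy
    rw [Real.sqrt_le_iff]
    refine ⟨norm_nonneg _, ?_⟩
    nlinarith [norm_nonneg a, norm_nonneg b, norm_nonneg c]

theorem norm_threePtDirac_commutator_le_one_iff (D12 D13 D23 : ℝ) (z : Fin 3 → ℂ) :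
    ‖Matrix.toEuclideanCLM (𝕜 := ℂ) (threePtDirac D12 D13 D23 * Matrix.diagonal z
        - Matrix.diagonal z * threePtDirac D12 D13 D23)‖ ≤ 1 ↔
      D12 ^ 2 * ‖z 0 - z 1‖ ^ 2 + D13 ^ 2 * ‖z 0 - z 2‖ ^ 2 + D23 ^ 2 * ‖z 1 - z 2‖ ^ 2 ≤ 1 := by
  rw [threePtDirac_commutator_diagonal, norm_toEuclideanCLM_skewMatrix3, Real.sqrt_le_one]
  simp only [norm_mul, mul_pow, Complex.norm_real, Real.norm_eq_abs, sq_abs]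
  rw [norm_sub_rev (z 1), norm_sub_rev (z 2), norm_sub_rev (z 2)]

theorem mul_sq_norm_sub_le_of_weighted_le {E : Type*} [SeminormedAddCommGroup E] (A B C : ℝ)
    (x y w : E) (h : A ^ 2 * ‖x - y‖ ^ 2 + B ^ 2 * ‖x - w‖ ^ 2 + C ^ 2 * ‖y - w‖ ^ 2 ≤ 1) :
    (A ^ 2 * B ^ 2 + A ^ 2 * C ^ 2 + C ^ 2 * B ^ 2) * ‖x - y‖ ^ 2 ≤ B ^ 2 + C ^ 2 := by
  have h_tri : ‖x - y‖ ^ 2 ≤ (‖x - w‖ + ‖y - w‖) ^ 2 :=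
    pow_le_pow_left₀ (norm_nonneg _) (norm_sub_le_norm_sub_add_norm_sub x w y |>.trans_eq
      (by rw [norm_sub_rev w y])) 2
  -- Cauchy–Schwarz: `B² C² (q + r)² ≤ (B² + C²) (B² q² + C² r²)` for `q = ‖x - w‖`, `r = ‖y - w‖`
  nlinarith [mul_le_mul_of_nonneg_left h_tri (by positivity : 0 ≤ B ^ 2 * C ^ 2),
    mul_le_mul_of_nonneg_left h (by positivity : 0 ≤ B ^ 2 + C ^ 2),
    sq_nonneg (B ^ 2 * ‖x - w‖ - C ^ 2 * ‖y - w‖)]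

theorem exists_weighted_le_one_norm_sub_eq (A B C : ℝ)
    (hK : 0 < A ^ 2 * B ^ 2 + A ^ 2 * C ^ 2 + C ^ 2 * B ^ 2) :
    ∃ z : Fin 3 → ℂ,
      A ^ 2 * ‖z 0 - z 1‖ ^ 2 + B ^ 2 * ‖z 0 - z 2‖ ^ 2 + C ^ 2 * ‖z 1 - z 2‖ ^ 2 ≤ 1 ∧
        ‖z 0 - z 1‖ = √((B ^ 2 + C ^ 2) / (A ^ 2 * B ^ 2 + A ^ 2 * C ^ 2 + C ^ 2 * B ^ 2)) := by
  set T := B ^ 2 + C ^ 2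
  set d := √(T / (A ^ 2 * B ^ 2 + A ^ 2 * C ^ 2 + C ^ 2 * B ^ 2))
  have hT : T ≠ 0 := fun hT ↦ by nlinarith [sq_nonneg A, sq_nonneg B, sq_nonneg C]
  have hd : d ^ 2 * (A ^ 2 * B ^ 2 + A ^ 2 * C ^ 2 + C ^ 2 * B ^ 2) = T := by
    rw [Real.sq_sqrt (div_nonneg (by positivity) hK.le), div_mul_cancel₀ _ hK.ne']
  -- the equality case of the Cauchy–Schwarz step in `mul_sq_norm_sub_le_of_weighted_le`
  refine ⟨![(d : ℂ), 0, ((B ^ 2 * d / T : ℝ) : ℂ)], le_of_eq ?_, ?_⟩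
  · simp only [Matrix.cons_val_zero, Matrix.cons_val_one, Matrix.cons_val_two, Matrix.head_cons,
      Matrix.tail_cons, ← Complex.ofReal_zero, ← Complex.ofReal_sub, Complex.norm_real,
      Real.norm_eq_abs, sq_abs]
    field_simp
    linear_combination T * hd
  · simp [d]

theorem three_point_distance_general (D12 D13 D23 : ℝ)
    (h12 : D12 ≠ 0) (h13 : D13 ≠ 0) :
    (⨆ z : {z : Fin 3 → ℂ // ‖Matrix.toEuclideanCLM (𝕜 := ℂ)
        (threePtDirac D12 D13 D23 * Matrix.diagonal z
          - Matrix.diagonal z * threePtDirac D12 D13 D23)‖ ≤ 1},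
      ENNReal.ofReal ‖(z : Fin 3 → ℂ) 0 - (z : Fin 3 → ℂ) 1‖)
      = ENNReal.ofReal (Real.sqrt ((D13 ^ 2 + D23 ^ 2) /
          (D12 ^ 2 * D13 ^ 2 + D12 ^ 2 * D23 ^ 2 + D23 ^ 2 * D13 ^ 2))) := by
  have hK : 0 < D12 ^ 2 * D13 ^ 2 + D12 ^ 2 * D23 ^ 2 + D23 ^ 2 * D13 ^ 2 := by positivity
  apply le_antisymm
  · refine iSup_le fun ⟨z, hz⟩ ↦ ENNReal.ofReal_le_ofReal ?_
    rw [norm_threePtDirac_commutator_le_one_iff] at hz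
    rw [Real.le_sqrt (norm_nonneg _) (by positivity), le_div_iff₀ hK, mul_comm]
    exact mul_sq_norm_sub_le_of_weighted_le D12 D13 D23 (z 0) (z 1) (z 2) hz
  · obtain ⟨z, hz, hdist⟩ := exists_weighted_le_one_norm_sub_eq D12 D13 D23 hK
    rw [← norm_threePtDirac_commutator_le_one_iff] at hz
    exact le_iSup_of_le (ι := {z : Fin 3 → ℂ // _}) ⟨z, hz⟩ (ENNReal.ofReal_le_ofReal hdist.ge)

/-- Connes distance between the first two points of a three-point space. -/
theorem three_point_distance (D12 D13 D23 : ℝ)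
    (h12 : D12 ≠ 0) (h13 : D13 ≠ 0) (h23 : D23 ≠ 0) :
    (⨆ z : {z : Fin 3 → ℂ // ‖Matrix.toEuclideanCLM (𝕜 := ℂ)
        (threePtDirac D12 D13 D23 * Matrix.diagonal z
          - Matrix.diagonal z * threePtDirac D12 D13 D23)‖ ≤ 1},
      ENNReal.ofReal ‖(z : Fin 3 → ℂ) 0 - (z : Fin 3 → ℂ) 1‖)
      = ENNReal.ofReal (Real.sqrt ((D13 ^ 2 + D23 ^ 2) /
          (D12 ^ 2 * D13 ^ 2 + D12 ^ 2 * D23 ^ 2 + D23 ^ 2 * D13 ^ 2))) :=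
  three_point_distance_general D12 D13 D23 h12 h13
end

section
/- In the three-point space with real symmetric Dirac operator (zero diagonal, nonzero off-diagonal entries), the spectral distances satisfy the 'triangle inequality to the square': d(1,2)² + d(2,3)² ≥ d(1,3)², where d(i,j) are given by the formula d(1,2) = sqrt((D₁₃²+D₂₃²)/(D₁₂²D₁₃²+D₁₂²D₂₃²+D₂₃²D₁₃²)) and its cyclic permutations. -/
theorem sq_sqrt_div_add_sq_sqrt_div {a b c S : ℝ} (ha : 0 ≤ a) (hb : 0 ≤ b) (hc : 0 ≤ c)
    (hS : 0 ≤ S) :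
    √((b + c) / S) ^ 2 + √((a + b) / S) ^ 2 = √((a + c) / S) ^ 2 + 2 * b / S := by
  rw [Real.sq_sqrt (by positivity), Real.sq_sqrt (by positivity), Real.sq_sqrt (by positivity)]
  ring

theorem three_point_triangle_sq_general (D12 D13 D23 : ℝ) :
    let S := D12 ^ 2 * D13 ^ 2 + D12 ^ 2 * D23 ^ 2 + D23 ^ 2 * D13 ^ 2
    let d12 := Real.sqrt ((D13 ^ 2 + D23 ^ 2) / S)
    let d23 := Real.sqrt ((D12 ^ 2 + D13 ^ 2) / S)
    let d13 := Real.sqrt ((D12 ^ 2 + D23 ^ 2) / S)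
    d12 ^ 2 + d23 ^ 2 ≥ d13 ^ 2 := by
  intro S d12 d23 d13
  have hS : 0 ≤ S := by positivity
  rw [ge_iff_le, sq_sqrt_div_add_sq_sqrt_div (sq_nonneg D12) (sq_nonneg D13) (sq_nonneg D23) hS]
  exact le_add_of_nonneg_right (by positivity)

/-- In the three-point space, the spectral distances satisfy the triangle inequality
"to the square": `d(1,2)² + d(2,3)² ≥ d(1,3)²`. -/
theorem three_point_triangle_sq (D12 D13 D23 : ℝ)
    (h12 : D12 ≠ 0) (h13 : D13 ≠ 0) (h23 : D23 ≠ 0) :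
    let S := D12 ^ 2 * D13 ^ 2 + D12 ^ 2 * D23 ^ 2 + D23 ^ 2 * D13 ^ 2
    let d12 := Real.sqrt ((D13 ^ 2 + D23 ^ 2) / S)
    let d23 := Real.sqrt ((D12 ^ 2 + D13 ^ 2) / S)
    let d13 := Real.sqrt ((D12 ^ 2 + D23 ^ 2) / S)
    d12 ^ 2 + d23 ^ 2 ≥ d13 ^ 2 :=
  three_point_triangle_sq_general D12 D13 D23
end

section
/- Given three positive real numbers a, b, c with a² + b² ≥ c², b² + c² ≥ a², and a² + c² ≥ b², and with a, b, c satisfying the strict triangle inequality so the expressions below are defined, the real numbers D₁₂ = sqrt( 2(b²+c²−a²) / ((a+b+c)(−a+b+c)(a−b+c)(a+b−c)) ) and its cyclic permutations D₁₃, D₂₃ satisfy the inversion: sqrt((D₁₃²+D₂₃²)/(D₁₂²D₁₃²+D₁₂²D₂₃²+D₂₃²D₁₃²)) = a, and cyclically for b and c. -/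
/-! With `u = b² + c² - a²`, `v = c² + a² - b²`, `w = a² + b² - c²` one has `v + w = 2a²` (and
cyclically), while Heron's product `P = (a+b+c)(-a+b+c)(a-b+c)(a+b-c)` equals `uv + uw + wv`.
Hence `D₁₂² = 2u/P`, … give `S = 4(uv + uw + wv)/P² = 4/P`, and `(D₁₃² + D₂₃²)/S = (v + w)/2 = a²`. -/

theorem heron_product_eq {R : Type*} [CommRing R] (a b c : R) :
    (a + b + c) * (-a + b + c) * (a - b + c) * (a + b - c) =
      (b ^ 2 + c ^ 2 - a ^ 2) * (c ^ 2 + a ^ 2 - b ^ 2) +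
        (b ^ 2 + c ^ 2 - a ^ 2) * (a ^ 2 + b ^ 2 - c ^ 2) +
          (a ^ 2 + b ^ 2 - c ^ 2) * (c ^ 2 + a ^ 2 - b ^ 2) := by
  ring

theorem heron_product_pos {K : Type*} [Field K] [LinearOrder K] [IsStrictOrderedRing K]
    {a b c : K} (ha : 0 < a) (t1 : a < b + c) (t2 : b < a + c)
    (t3 : c < a + b) : 0 < (a + b + c) * (-a + b + c) * (a - b + c) * (a + b - c) :=
  mul_pos (mul_pos (mul_pos (by linarith) (by linarith)) (by linarith)) (by linarith)

theorem two_mul_div_pairwise_mul_sum_eq_four_div {K : Type*} [Field K] {u v w e : K}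
    (he : e = u * v + u * w + w * v) (he0 : e ≠ 0) :
    2 * u / e * (2 * v / e) + 2 * u / e * (2 * w / e) + 2 * w / e * (2 * v / e) = 4 / e := by
  field_simp
  rw [he]
  ring

theorem sqrt_two_mul_div_add_div_four_div {x y e r : ℝ} (he : e ≠ 0) (hr : 0 ≤ r)
    (hxy : x + y = 2 * r ^ 2) : √((2 * x / e + 2 * y / e) / (4 / e)) = r := by
  have : (2 * x / e + 2 * y / e) / (4 / e) = r ^ 2 := by
    field_simp
    linarith
  rw [this, Real.sqrt_sq hr]

/-- Inversion of the three-point distance formula: given `a b c > 0` satisfying the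
squared triangle inequalities (and the strict triangle inequality, so that the
expressions are defined), the Dirac coefficients `D₁₂, D₁₃, D₂₃` below reproduce
`a, b, c` as spectral distances. -/
theorem three_point_inversion (a b c : ℝ) (ha : 0 < a) (hb : 0 < b) (hc : 0 < c)
    (h1 : a ^ 2 + b ^ 2 ≥ c ^ 2) (h2 : b ^ 2 + c ^ 2 ≥ a ^ 2) (h3 : a ^ 2 + c ^ 2 ≥ b ^ 2)
    (t1 : a < b + c) (t2 : b < a + c) (t3 : c < a + b) :
    let P := (a + b + c) * (-a + b + c) * (a - b + c) * (a + b - c)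
    let D12 := Real.sqrt (2 * (b ^ 2 + c ^ 2 - a ^ 2) / P)
    let D13 := Real.sqrt (2 * (c ^ 2 + a ^ 2 - b ^ 2) / P)
    let D23 := Real.sqrt (2 * (a ^ 2 + b ^ 2 - c ^ 2) / P)
    let S := D12 ^ 2 * D13 ^ 2 + D12 ^ 2 * D23 ^ 2 + D23 ^ 2 * D13 ^ 2
    Real.sqrt ((D13 ^ 2 + D23 ^ 2) / S) = a ∧
      Real.sqrt ((D12 ^ 2 + D23 ^ 2) / S) = b ∧
      Real.sqrt ((D12 ^ 2 + D13 ^ 2) / S) = c := by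
  intro P D12 D13 D23 S
  have hP : 0 < P := heron_product_pos ha t1 t2 t3
  have e12 : D12 ^ 2 = 2 * (b ^ 2 + c ^ 2 - a ^ 2) / P :=
    Real.sq_sqrt (div_nonneg (by linarith) hP.le)
  have e13 : D13 ^ 2 = 2 * (c ^ 2 + a ^ 2 - b ^ 2) / P :=
    Real.sq_sqrt (div_nonneg (by linarith) hP.le)
  have e23 : D23 ^ 2 = 2 * (a ^ 2 + b ^ 2 - c ^ 2) / P :=
    Real.sq_sqrt (div_nonneg (by linarith) hP.le)
  have hS : S = 4 / P := by
    simp only [S, e12, e13, e23]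
    exact two_mul_div_pairwise_mul_sum_eq_four_div (heron_product_eq a b c) hP.ne'
  refine ⟨?_, ?_, ?_⟩ <;> simp only [hS, e12, e13, e23]
  · exact sqrt_two_mul_div_add_div_four_div hP.ne' ha.le (by ring)
  · exact sqrt_two_mul_div_add_div_four_div hP.ne' hb.le (by ring)
  · exact sqrt_two_mul_div_add_div_four_div hP.ne' hc.le (by ring)
end

section
/- Let A = ℂ^N act diagonally on H = ℂ^N and let D be the real symmetric N×N matrix with zero diagonal and all off-diagonal entries equal to a nonzero constant k. Then the spectral distance between any two pure states δ_i, δ_j (i ≠ j) equals (1/|k|)·sqrt(2/N). -/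
/-!
The commutator `[D, diag z]` sends `x` to `k (⟪z̄, x⟫ 𝟙 - ⟪𝟙, x⟫ z)`. Testing it on `eᵢ - eⱼ`,
which is orthogonal to `𝟙`, gives `|k| √N |zᵢ - zⱼ| ≤ √2 ‖[D, diag z]‖`. Conversely, for real
`z ⊥ 𝟙` the operator `x ↦ ⟪z, x⟫ 𝟙 - ⟪𝟙, x⟫ z` has norm at most `‖𝟙‖ ‖z‖` by Pythagoras and
Bessel's inequality for the orthogonal pair `𝟙, z`, so `z = c (eᵢ - eⱼ)` attains the bound.
-/

open scoped InnerProductSpace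

noncomputable def completeDirac (N : ℕ) (k : ℝ) : Matrix (Fin N) (Fin N) ℂ :=
  Matrix.of fun i j => if i = j then 0 else (k : ℂ)

section InnerProductSpace

variable {𝕜 E : Type*} [RCLike 𝕜] [NormedAddCommGroup E] [InnerProductSpace 𝕜 E]

theorem norm_inner_sq_mul_add_le_of_inner_eq_zero {u v : E} (huv : ⟪u, v⟫_𝕜 = 0) (x : E) :
    ‖⟪u, x⟫_𝕜‖ ^ 2 * ‖v‖ ^ 2 + ‖⟪v, x⟫_𝕜‖ ^ 2 * ‖u‖ ^ 2 ≤ ‖u‖ ^ 2 * ‖v‖ ^ 2 * ‖x‖ ^ 2 := by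
  rcases eq_or_ne u 0 with rfl | hu
  · simp
  rcases eq_or_ne v 0 with rfl | hv
  · simp
  have hon : Orthonormal 𝕜 ![(‖u‖⁻¹ : 𝕜) • u, (‖v‖⁻¹ : 𝕜) • v] := by
    rw [orthonormal_iff_ite]
    have hu' : (‖u‖ : 𝕜) ≠ 0 := by simpa using hu
    have hv' : (‖v‖ : 𝕜) ≠ 0 := by simpa using hv
    simp [Fin.forall_fin_two, inner_smul_left, inner_smul_right, huv, inner_eq_zero_symm.1 huv,
      inner_self_eq_norm_sq_to_K, sq, hu', hv']
  have bessel := hon.sum_inner_products_le x (s := Finset.univ)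
  simp only [Fin.sum_univ_two, Matrix.cons_val_zero, Matrix.cons_val_one, inner_smul_left,
    norm_mul, RCLike.norm_conj, norm_inv, RCLike.norm_ofReal, abs_norm] at bessel
  rw [mul_pow, mul_pow, inv_pow, inv_pow] at bessel
  field_simp at bessel
  linarith

theorem norm_inner_smul_sub_inner_smul_le {u v : E} (huv : ⟪u, v⟫_𝕜 = 0) (x : E) :
    ‖⟪v, x⟫_𝕜 • u - ⟪u, x⟫_𝕜 • v‖ ≤ ‖u‖ * ‖v‖ * ‖x‖ := by
  have pythagoras : ‖⟪v, x⟫_𝕜 • u - ⟪u, x⟫_𝕜 • v‖ ^ 2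
      = ‖⟪v, x⟫_𝕜‖ ^ 2 * ‖u‖ ^ 2 + ‖⟪u, x⟫_𝕜‖ ^ 2 * ‖v‖ ^ 2 := by
    simp [norm_sub_sq (𝕜 := 𝕜), inner_smul_left, inner_smul_right, huv, norm_smul, mul_pow]
  refine (pow_le_pow_iff_left₀ (norm_nonneg _) (by positivity) two_ne_zero).1 ?_
  rw [pythagoras, mul_pow, mul_pow]
  linarith [norm_inner_sq_mul_add_le_of_inner_eq_zero huv x]

end InnerProductSpace

open Matrix WithLp

section EuclideanSpace

variable {𝕜 ι : Type*} [RCLike 𝕜] [Fintype ι]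

theorem EuclideanSpace.norm_toLp_one : ‖(toLp 2 1 : EuclideanSpace 𝕜 ι)‖ = √(Fintype.card ι) := by
  simp [EuclideanSpace.norm_eq]

theorem EuclideanSpace.norm_single_sub_single [DecidableEq ι] {i j : ι} (hij : i ≠ j) :
    ‖EuclideanSpace.single i (1 : 𝕜) - EuclideanSpace.single j 1‖ = √2 := by
  rw [← sq_eq_sq₀ (norm_nonneg _) (Real.sqrt_nonneg 2), norm_sub_sq (𝕜 := 𝕜)]
  norm_num [EuclideanSpace.inner_single_left, hij.symm]

end EuclideanSpace

theorem completeDirac_lie_diagonal_apply (N : ℕ) (k : ℝ) (z : Fin N → ℂ) (a b : Fin N) :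
    ⁅completeDirac N k, diagonal z⁆ a b = k * (z b - z a) := by
  rcases eq_or_ne a b with rfl | hab
  · simp [Ring.lie_def, completeDirac]
  · simp only [Ring.lie_def, completeDirac, Matrix.sub_apply, mul_diagonal, diagonal_mul, of_apply,
      hab, if_false]
    ring

theorem toEuclideanCLM_completeDirac_lie_diagonal (N : ℕ) (k : ℝ) (z : Fin N → ℂ)
    (x : EuclideanSpace ℂ (Fin N)) :
    toEuclideanCLM (𝕜 := ℂ) ⁅completeDirac N k, diagonal z⁆ x
      = (k : ℂ) • (⟪toLp 2 (star z), x⟫_ℂ • toLp 2 1 - ⟪toLp 2 1, x⟫_ℂ • toLp 2 z) := by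
  ext a
  simp only [ofLp_toEuclideanCLM, mulVec, dotProduct, completeDirac_lie_diagonal_apply,
    EuclideanSpace.inner_eq_star_dotProduct, Pi.star_apply, star_star, Pi.one_apply, star_one,
    mul_one, PiLp.smul_apply, PiLp.sub_apply, smul_eq_mul]
  rw [Finset.sum_mul, ← Finset.sum_sub_distrib, Finset.mul_sum]
  exact Finset.sum_congr rfl fun b _ => by ring

theorem abs_mul_sqrt_mul_norm_sub_le (N : ℕ) (k : ℝ) (z : Fin N → ℂ) {i j : Fin N}
    (hij : i ≠ j) :
    |k| * √N * ‖z i - z j‖ ≤ ‖toEuclideanCLM (𝕜 := ℂ) ⁅completeDirac N k, diagonal z⁆‖ * √2 := by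
  set w := EuclideanSpace.single i (1 : ℂ) - EuclideanSpace.single j 1
  have hw : toEuclideanCLM (𝕜 := ℂ) ⁅completeDirac N k, diagonal z⁆ w
      = ((k : ℂ) * (z i - z j)) • toLp 2 1 := by
    rw [toEuclideanCLM_completeDirac_lie_diagonal]
    simp [w, EuclideanSpace.inner_single_right, mul_smul]
  have hle := (toEuclideanCLM (𝕜 := ℂ) ⁅completeDirac N k, diagonal z⁆).le_opNorm w
  rw [hw, norm_smul, EuclideanSpace.norm_toLp_one, EuclideanSpace.norm_single_sub_single hij,
    norm_mul] at hle
  simpa [mul_comm, mul_left_comm, mul_assoc] using hle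

theorem norm_toEuclideanCLM_completeDirac_lie_diagonal_le (N : ℕ) (k : ℝ) {z : Fin N → ℂ}
    (hz_star : star z = z) (hz_sum : ∑ a, z a = 0) :
    ‖toEuclideanCLM (𝕜 := ℂ) ⁅completeDirac N k, diagonal z⁆‖ ≤ |k| * √N * ‖toLp 2 z‖ := by
  have horth : ⟪(toLp 2 1 : EuclideanSpace ℂ (Fin N)), toLp 2 z⟫_ℂ = 0 := by
    simpa [EuclideanSpace.inner_eq_star_dotProduct, dotProduct] using hz_sum
  refine ContinuousLinearMap.opNorm_le_bound _ (by positivity) fun x => ?_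
  rw [toEuclideanCLM_completeDirac_lie_diagonal, hz_star, norm_smul]
  simpa [mul_assoc, EuclideanSpace.norm_toLp_one] using
    mul_le_mul_of_nonneg_left (norm_inner_smul_sub_inner_smul_le horth x) (abs_nonneg k)

theorem norm_toEuclideanCLM_completeDirac_lie_diagonal_smul_single_sub_single_le (N : ℕ)
    (k c : ℝ) {i j : Fin N} (hij : i ≠ j) :
    ‖toEuclideanCLM (𝕜 := ℂ)
        ⁅completeDirac N k, diagonal ((c : ℂ) • (Pi.single i 1 - Pi.single j 1 : Fin N → ℂ))⁆‖
      ≤ |k| * √N * (|c| * √2) := by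
  have hz_star : star ((c : ℂ) • (Pi.single i 1 - Pi.single j 1 : Fin N → ℂ))
      = (c : ℂ) • (Pi.single i 1 - Pi.single j 1) := by
    simp [star_smul, Pi.star_single]
  have hz_sum : ∑ a, ((c : ℂ) • (Pi.single i 1 - Pi.single j 1 : Fin N → ℂ)) a = 0 := by
    simp [← Finset.mul_sum, Finset.sum_sub_distrib]
  refine (norm_toEuclideanCLM_completeDirac_lie_diagonal_le N k hz_star hz_sum).trans_eq ?_
  congr 1
  simpa [norm_smul] using congrArg (|c| * ·) (EuclideanSpace.norm_single_sub_single (𝕜 := ℂ) hij)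

theorem complete_graph_distance_general (N : ℕ) (k : ℝ) (hk : k ≠ 0)
    (i j : Fin N) (hij : i ≠ j) :
    (⨆ z : {z : Fin N → ℂ // ‖Matrix.toEuclideanCLM (𝕜 := ℂ)
        (completeDirac N k * Matrix.diagonal z
          - Matrix.diagonal z * completeDirac N k)‖ ≤ 1},
      ENNReal.ofReal ‖(z : Fin N → ℂ) i - (z : Fin N → ℂ) j‖)
      = ENNReal.ofReal ((1 / |k|) * Real.sqrt (2 / N)) := by
  set d := (1 / |k|) * √(2 / N)
  have hN : (0 : ℝ) < N := by exact_mod_cast i.pos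
  have hd : |k| * √N * d = √2 := by
    simp only [d, Real.sqrt_div' 2 hN.le]
    field_simp
  have hd_nonneg : 0 ≤ d := by positivity
  simp only [← Ring.lie_def]
  refine le_antisymm (iSup_le fun ⟨z, hz⟩ => ENNReal.ofReal_le_ofReal ?_) ?_
  · refine le_of_mul_le_mul_left ?_ (by positivity : 0 < |k| * √N)
    calc |k| * √N * ‖z i - z j‖ ≤ _ := abs_mul_sqrt_mul_norm_sub_le N k z hij
      _ ≤ 1 * √2 := by gcongr
      _ = _ := by rw [one_mul, hd]
  · have hbound : |k| * √N * (|d / 2| * √2) = 1 := by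
      rw [abs_of_nonneg (div_nonneg hd_nonneg zero_le_two)]
      linear_combination (√2 / 2) * hd + Real.mul_self_sqrt zero_le_two / 2
    have hz := (norm_toEuclideanCLM_completeDirac_lie_diagonal_smul_single_sub_single_le
      N k (d / 2) hij).trans_eq hbound
    refine le_iSup_of_le ⟨_, hz⟩ (le_of_eq ?_)
    simp [hij, hij.symm, abs_of_nonneg hd_nonneg]

/-- On the maximally connected graph the spectral distance between any two points is
`(1/|k|)·√(2/N)`. -/
theorem complete_graph_distance (N : ℕ) (hN : 2 ≤ N) (k : ℝ) (hk : k ≠ 0)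
    (i j : Fin N) (hij : i ≠ j) :
    (⨆ z : {z : Fin N → ℂ // ‖Matrix.toEuclideanCLM (𝕜 := ℂ)
        (completeDirac N k * Matrix.diagonal z
          - Matrix.diagonal z * completeDirac N k)‖ ≤ 1},
      ENNReal.ofReal ‖(z : Fin N → ℂ) i - (z : Fin N → ℂ) j‖)
      = ENNReal.ofReal ((1 / |k|) * Real.sqrt (2 / N)) :=
  complete_graph_distance_general N k hk i j hij
end

section
/- For the distance on a graph defined via a symmetric real incidence matrix D (as Dirac operator on ℂ^N with ℂ^N acting diagonally), the spectral distance between two points i, j is bounded above by the geodesic graph distance: d(i,j) ≤ L_{ij}, where L_{ij} is the infimum over paths γ = (i, i₂, …, i_{p−1}, j) with all D_{i_k i_{k+1}} ≠ 0 of Σ_k 1/|D_{i_k i_{k+1}}|. -/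
/-!
Each entry of `[D, diag z]` is `D_ab (z_b - z_a)`, and an operator norm dominates every matrix
entry, so `‖[D, diag z]‖ ≤ 1` makes `z` move by at most `1/|D_ab|` along each edge of the graph.
Summing these bounds along a path telescopes to `|z_i - z_j| ≤ length`.
-/

open scoped ENNReal

/-- A path in the graph with incidence matrix `Dm`, from `i` to `j`: a finite sequence
of distinct vertices with consecutive vertices linked by nonzero entries of `Dm`. -/
structure GraphPath (N : ℕ) (Dm : Matrix (Fin N) (Fin N) ℝ) (i j : Fin N) where
  len : ℕ
  vert : Fin (len + 1) → Fin N
  inj : Function.Injective vert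
  first : vert 0 = i
  last : vert (Fin.last len) = j
  link : ∀ k : Fin len, Dm (vert k.castSucc) (vert k.succ) ≠ 0

/-- The length of a path: the sum of the reciprocals `1/|D_{i_k i_{k+1}}|`. -/
noncomputable def GraphPath.length {N : ℕ} {Dm : Matrix (Fin N) (Fin N) ℝ} {i j : Fin N}
    (p : GraphPath N Dm i j) : ℝ :=
  ∑ k : Fin p.len, 1 / |Dm (p.vert k.castSucc) (p.vert k.succ)|

open Matrix

lemma Fin.sum_univ_castSucc_sub_succ {G : Type*} [AddCommGroup G] {n : ℕ} (f : Fin (n + 1) → G) :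
    ∑ k : Fin n, (f k.castSucc - f k.succ) = f 0 - f (Fin.last n) := by
  induction n with
  | zero => simp
  | succ n ih =>
    rw [Fin.sum_univ_castSucc]
    simp only [Fin.succ_castSucc]
    rw [ih fun k => f k.castSucc]
    simp

section

variable {𝕜 : Type*} [RCLike 𝕜] {n : Type*} [Fintype n] [DecidableEq n]

lemma Matrix.norm_apply_le_norm_toEuclideanCLM (M : Matrix n n 𝕜) (a b : n) :
    ‖M a b‖ ≤ ‖toEuclideanCLM (n := n) (𝕜 := 𝕜) M‖ :=
  calc ‖M a b‖ = ‖toEuclideanCLM (n := n) (𝕜 := 𝕜) M (EuclideanSpace.single b 1) a‖ := by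
        simp [EuclideanSpace.single]
    _ ≤ ‖toEuclideanCLM (n := n) (𝕜 := 𝕜) M (EuclideanSpace.single b 1)‖ := PiLp.norm_apply_le _ _
    _ ≤ ‖toEuclideanCLM (n := n) (𝕜 := 𝕜) M‖ := by
        simpa using (toEuclideanCLM (n := n) (𝕜 := 𝕜) M).le_opNorm (EuclideanSpace.single b 1)

lemma Matrix.commutator_diagonal_apply {R : Type*} [CommRing R] (D : Matrix n n R) (z : n → R)
    (a b : n) : (D * diagonal z - diagonal z * D) a b = D a b * (z b - z a) := by
  simp only [sub_apply, mul_diagonal, diagonal_mul]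
  ring

lemma Matrix.norm_mul_norm_sub_le_norm_commutator_diagonal (D : Matrix n n 𝕜) (z : n → 𝕜)
    (a b : n) :
    ‖D a b‖ * ‖z a - z b‖ ≤ ‖toEuclideanCLM (n := n) (𝕜 := 𝕜) (D * diagonal z - diagonal z * D)‖ :=
  calc ‖D a b‖ * ‖z a - z b‖ = ‖(D * diagonal z - diagonal z * D) a b‖ := by
        rw [commutator_diagonal_apply, norm_mul, norm_sub_rev]
    _ ≤ _ := norm_apply_le_norm_toEuclideanCLM _ a b

end

lemma GraphPath.norm_sub_le_length {E : Type*} [SeminormedAddCommGroup E] {N : ℕ}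
    {Dm : Matrix (Fin N) (Fin N) ℝ} {i j : Fin N} (p : GraphPath N Dm i j) {f : Fin N → E}
    (hf : ∀ a b, Dm a b ≠ 0 → ‖f a - f b‖ ≤ 1 / |Dm a b|) : ‖f i - f j‖ ≤ p.length :=
  calc ‖f i - f j‖ = ‖∑ k : Fin p.len, (f (p.vert k.castSucc) - f (p.vert k.succ))‖ := by
        rw [Fin.sum_univ_castSucc_sub_succ fun k => f (p.vert k), p.first, p.last]
    _ ≤ ∑ k : Fin p.len, ‖f (p.vert k.castSucc) - f (p.vert k.succ)‖ := norm_sum_le _ _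
    _ ≤ p.length := Finset.sum_le_sum fun k _ => hf _ _ (p.link k)

theorem graph_distance_le_geodesic_general (N : ℕ) (Dm : Matrix (Fin N) (Fin N) ℝ)
    (i j : Fin N) :
    (⨆ z : {z : Fin N → ℂ // ‖Matrix.toEuclideanCLM (𝕜 := ℂ)
        ((Dm.map (fun x => (x : ℂ))) * Matrix.diagonal z
          - Matrix.diagonal z * (Dm.map (fun x => (x : ℂ))))‖ ≤ 1},
      ENNReal.ofReal ‖(z : Fin N → ℂ) i - (z : Fin N → ℂ) j‖)
      ≤ ⨅ p : GraphPath N Dm i j, ENNReal.ofReal p.length := by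
  refine iSup_le fun ⟨z, hz⟩ => le_iInf fun p => ENNReal.ofReal_le_ofReal ?_
  refine p.norm_sub_le_length fun a b hab => ?_
  have hedge := norm_mul_norm_sub_le_norm_commutator_diagonal (Dm.map (fun x => (x : ℂ))) z a b
  rw [map_apply, Complex.norm_real, Real.norm_eq_abs] at hedge
  rw [le_div_iff₀' (abs_pos.2 hab)]
  exact hedge.trans hz

/-- The spectral distance on a graph is bounded above by the geodesic graph distance. -/
theorem graph_distance_le_geodesic (N : ℕ) (Dm : Matrix (Fin N) (Fin N) ℝ)
    (hsym : Dm.IsSymm) (hdiag : ∀ i, Dm i i = 0) (i j : Fin N) :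
    (⨆ z : {z : Fin N → ℂ // ‖Matrix.toEuclideanCLM (𝕜 := ℂ)
        ((Dm.map (fun x => (x : ℂ))) * Matrix.diagonal z
          - Matrix.diagonal z * (Dm.map (fun x => (x : ℂ))))‖ ≤ 1},
      ENNReal.ofReal ‖(z : Fin N → ℂ) i - (z : Fin N → ℂ) j‖)
      ≤ ⨅ p : GraphPath N Dm i j, ENNReal.ofReal p.length :=
  graph_distance_le_geodesic_general N Dm i j
end

section
/- In a graph spectral triple, the spectral distance between two points i and j is finite if and only if i and j are connected by a path in the graph (i.e., a sequence of indices with nonzero consecutive entries of D). -/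
open scoped ENNReal

/-!
If `p` is a path from `i` to `j`, the `(a, b)` entry of `[D, diag z]` is `D a b * (z b - z a)`, and
entries are bounded by the operator norm; so every admissible `z` moves by at most `|D a b|⁻¹`
along each edge of `p`, and `‖z i - z j‖` is bounded by the sum of these along `p`.
If `j` is not reachable from `i`, then `t` times the indicator of the connected component of `i`
commutes with `D` and separates `i` from `j` by `t`, for every `t`.
-/

open Matrix

namespace Matrix

section

variable {n : Type*} [Fintype n] [DecidableEq n]

lemma norm_apply_le_norm_toEuclideanCLM_s12 {𝕜 : Type*} [RCLike 𝕜] (M : Matrix n n 𝕜) (a b : n) :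
    ‖M a b‖ ≤ ‖toEuclideanCLM (𝕜 := 𝕜) M‖ := by
  set T := toEuclideanCLM (𝕜 := 𝕜) M
  calc ‖M a b‖ = ‖T (EuclideanSpace.single b 1) a‖ := by
        simp [T, EuclideanSpace.single, mulVec_single]
    _ ≤ ‖T (EuclideanSpace.single b 1)‖ := PiLp.norm_apply_le _ a
    _ ≤ ‖T‖ := by simpa using T.le_opNorm (EuclideanSpace.single b 1)

lemma commutator_diagonal_apply_s12 {R : Type*} [CommRing R] (D : Matrix n n R) (z : n → R)
    (a b : n) : (D * diagonal z - diagonal z * D) a b = D a b * (z b - z a) := by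
  simp only [sub_apply, mul_diagonal, diagonal_mul]
  ring

lemma commutator_diagonal_eq_zero {R : Type*} [CommRing R] {D : Matrix n n R} {z : n → R}
    (h : ∀ a b, D a b ≠ 0 → z a = z b) : D * diagonal z - diagonal z * D = 0 := by
  ext a b
  rw [commutator_diagonal_apply_s12, zero_apply]
  by_cases hD : D a b = 0
  · rw [hD, zero_mul]
  · rw [h a b hD, sub_self, mul_zero]

lemma norm_mul_norm_sub_le_norm_commutator {𝕜 : Type*} [RCLike 𝕜] (D : Matrix n n 𝕜)
    (z : n → 𝕜) (a b : n) :
    ‖D a b‖ * ‖z a - z b‖ ≤ ‖toEuclideanCLM (𝕜 := 𝕜) (D * diagonal z - diagonal z * D)‖ := by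
  have := norm_apply_le_norm_toEuclideanCLM_s12 (D * diagonal z - diagonal z * D) a b
  rwa [commutator_diagonal_apply_s12, norm_mul, norm_sub_rev] at this

end

abbrev supportGraph {n R : Type*} [Zero R] (D : Matrix n n R) : SimpleGraph n :=
  SimpleGraph.fromRel fun a b => D a b ≠ 0

end Matrix

lemma Fin.norm_sub_last_le_sum_norm_sub_succ {E : Type*} [SeminormedAddCommGroup E] :
    ∀ {n : ℕ} (f : Fin (n + 1) → E),
      ‖f 0 - f (Fin.last n)‖ ≤ ∑ k : Fin n, ‖f k.castSucc - f k.succ‖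
  | 0, f => by simp
  | n + 1, f => by
    rw [Fin.sum_univ_castSucc]
    calc ‖f 0 - f (Fin.last (n + 1))‖
        ≤ ‖f 0 - f (Fin.last n).castSucc‖ + ‖f (Fin.last n).castSucc - f (Fin.last n).succ‖ := by
          rw [Fin.succ_last]
          exact norm_sub_le_norm_sub_add_norm_sub _ _ _
      _ ≤ _ := by
          gcongr
          exact norm_sub_last_le_sum_norm_sub_succ (f ∘ Fin.castSucc)

lemma GraphPath.nonempty_of_reachable {N : ℕ} {Dm : Matrix (Fin N) (Fin N) ℝ} (hsym : Dm.IsSymm)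
    {i j : Fin N} (h : Dm.supportGraph.Reachable i j) : Nonempty (GraphPath N Dm i j) := by
  obtain ⟨p, hp⟩ := h.some.toPath
  refine ⟨⟨p.length, fun k => p.getVert k, fun a b hab => ?_, by simp, by simp, fun k => ?_⟩⟩
  · exact Fin.ext (hp.getVert_injOn (by simp; omega) (by simp; omega) hab)
  · obtain ⟨-, hk | hk⟩ := p.adj_getVert_succ k.isLt
    · exact hk
    · rwa [hsym.apply] at hk

noncomputable def spectralDist {n : Type*} [Fintype n] [DecidableEq n] (D : Matrix n n ℝ)
    (i j : n) : ℝ≥0∞ :=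
  ⨆ z : {z : n → ℂ // ‖toEuclideanCLM (𝕜 := ℂ)
      (D.map (fun x => (x : ℂ)) * diagonal z - diagonal z * D.map (fun x => (x : ℂ)))‖ ≤ 1},
    ENNReal.ofReal ‖(z : n → ℂ) i - (z : n → ℂ) j‖

lemma spectralDist_le_of_graphPath {N : ℕ} {Dm : Matrix (Fin N) (Fin N) ℝ} {i j : Fin N}
    (p : GraphPath N Dm i j) :
    spectralDist Dm i j ≤
      ENNReal.ofReal (∑ k : Fin p.len, |Dm (p.vert k.castSucc) (p.vert k.succ)|⁻¹) := by
  refine iSup_le fun ⟨z, hz⟩ => ENNReal.ofReal_le_ofReal ?_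
  have hedge (k : Fin p.len) : ‖z (p.vert k.castSucc) - z (p.vert k.succ)‖
      ≤ |Dm (p.vert k.castSucc) (p.vert k.succ)|⁻¹ := by
    have := (norm_mul_norm_sub_le_norm_commutator _ z (p.vert k.castSucc) (p.vert k.succ)).trans hz
    rw [map_apply, Complex.norm_real, Real.norm_eq_abs] at this
    rwa [← one_div, le_div_iff₀' (abs_pos.mpr (p.link k))]
  calc ‖z i - z j‖ = ‖z (p.vert 0) - z (p.vert (Fin.last p.len))‖ := by rw [p.first, p.last]
    _ ≤ ∑ k : Fin p.len, ‖z (p.vert k.castSucc) - z (p.vert k.succ)‖ :=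
        Fin.norm_sub_last_le_sum_norm_sub_succ (z ∘ p.vert)
    _ ≤ _ := Finset.sum_le_sum fun k _ => hedge k

lemma spectralDist_eq_top_of_not_reachable {n : Type*} [Fintype n] [DecidableEq n]
    {Dm : Matrix n n ℝ} {i j : n} (h : ¬ Dm.supportGraph.Reachable i j) :
    spectralDist Dm i j = ⊤ := by
  classical
  refine ENNReal.eq_top_of_forall_nnreal_le fun r => ?_
  let z : n → ℂ := fun a => if Dm.supportGraph.Reachable i a then (r : ℂ) else 0
  have hconst (a b : n) (hab : Dm.map (fun x => (x : ℂ)) a b ≠ 0) : z a = z b := by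
    rcases eq_or_ne a b with rfl | hne
    · rfl
    have hadj : Dm.supportGraph.Adj a b := ⟨hne, .inl (by simpa using hab)⟩
    have hiff : Dm.supportGraph.Reachable i a ↔ Dm.supportGraph.Reachable i b :=
      ⟨fun h => h.trans hadj.reachable, fun h => h.trans hadj.reachable.symm⟩
    simp only [z, hiff]
  have hadm : ‖toEuclideanCLM (𝕜 := ℂ) (Dm.map (fun x => (x : ℂ)) * diagonal z
      - diagonal z * Dm.map (fun x => (x : ℂ)))‖ ≤ 1 := by
    rw [commutator_diagonal_eq_zero hconst, map_zero, norm_zero]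
    exact zero_le_one
  calc (r : ℝ≥0∞) = ENNReal.ofReal ‖z i - z j‖ := by simp [z, h]
    _ ≤ spectralDist Dm i j := le_iSup_of_le ⟨z, hadm⟩ le_rfl

theorem graph_distance_finite_iff_connected_general (N : ℕ) (Dm : Matrix (Fin N) (Fin N) ℝ)
    (hsym : Dm.IsSymm) (i j : Fin N) :
    (⨆ z : {z : Fin N → ℂ // ‖Matrix.toEuclideanCLM (𝕜 := ℂ)
        ((Dm.map (fun x => (x : ℂ))) * Matrix.diagonal z
          - Matrix.diagonal z * (Dm.map (fun x => (x : ℂ))))‖ ≤ 1},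
      ENNReal.ofReal ‖(z : Fin N → ℂ) i - (z : Fin N → ℂ) j‖) < ⊤
      ↔ Nonempty (GraphPath N Dm i j) := by
  show spectralDist Dm i j < ⊤ ↔ _
  constructor
  · intro hfin
    by_contra hpath
    exact hfin.ne <| spectralDist_eq_top_of_not_reachable <|
      mt (GraphPath.nonempty_of_reachable hsym) hpath
  · rintro ⟨p⟩
    exact (spectralDist_le_of_graphPath p).trans_lt ENNReal.ofReal_lt_top

/-- The spectral distance between two points of a graph is finite iff the points are
connected by a path. -/
theorem graph_distance_finite_iff_connected (N : ℕ) (Dm : Matrix (Fin N) (Fin N) ℝ)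
    (hsym : Dm.IsSymm) (hdiag : ∀ i, Dm i i = 0) (i j : Fin N) :
    (⨆ z : {z : Fin N → ℂ // ‖Matrix.toEuclideanCLM (𝕜 := ℂ)
        ((Dm.map (fun x => (x : ℂ))) * Matrix.diagonal z
          - Matrix.diagonal z * (Dm.map (fun x => (x : ℂ))))‖ ≤ 1},
      ENNReal.ofReal ‖(z : Fin N → ℂ) i - (z : Fin N → ℂ) j‖) < ⊤
      ↔ Nonempty (GraphPath N Dm i j) :=
  graph_distance_finite_iff_connected_general N Dm hsym i j
end

section
/- Let A = M₂(ℂ) act on H = ℂ² with D = diag(d₁, d₂), d₁ ≠ d₂. For two states φ, φ' of M₂(ℂ) identified with points (x̃, ỹ, z̃) and (x̃', ỹ', z̃') of the closed 3-ball via φ(a) = (1+z̃)/2·a₁₁ + (1−z̃)/2·a₂₂ + Re((x̃+iỹ)·a₁₂) (assuming a self-adjoint), if z̃ = z̃' then the spectral distance is d(φ, φ') = (1/|d₁−d₂|)·sqrt((x̃−x̃')² + (ỹ−ỹ')²). -/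
/-!
In the basis diagonalising `D`, the commutator `[D, a]` is off-diagonal with entries
`(d₁ - d₂) a₀₁` and `(d₂ - d₁) a₁₀`, so by the C*-identity its operator norm is
`|d₁ - d₂| · max (|a₀₁|, |a₁₀|)`. When the two states share `z̃`, the difference of the density
matrices is off-diagonal too, and `φ(a) - φ'(a) = (ζ a₀₁ + ζ̄ a₁₀) / 2` with
`ζ = (x̃ - x̃') + i (ỹ - ỹ')`. This is at most `|ζ| · max (|a₀₁|, |a₁₀|) ≤ |ζ| / |d₁ - d₂|`, with
equality for `a₀₁ = ζ̄ / (|ζ| (d₁ - d₂))`, `a₁₀ = ζ / (|ζ| (d₁ - d₂))`.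
-/

/-- The density matrix of the state of `M₂(ℂ)` associated to the point
`p = (x̃, ỹ, z̃)` of the closed 3-ball; the state is `a ↦ Tr(ρ_p a)`. -/
noncomputable def densityMat (p : ℝ × ℝ × ℝ) : Matrix (Fin 2) (Fin 2) ℂ :=
  !![((1 + p.2.2 : ℝ) : ℂ) / 2, ((p.1 : ℂ) - Complex.I * (p.2.1 : ℂ)) / 2;
     ((p.1 : ℂ) + Complex.I * (p.2.1 : ℂ)) / 2, ((1 - p.2.2 : ℝ) : ℂ) / 2]

open Matrix
open scoped ComplexConjugate Matrix.Norms.L2Operator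

section RCLike

variable {𝕜 : Type*} [RCLike 𝕜]

lemma Matrix.l2_opNorm_offDiag_fin_two (α β : 𝕜) : ‖!![0, α; β, 0]‖ = max ‖α‖ ‖β‖ := by
  have hsq : ‖!![0, α; β, 0]‖ * ‖!![0, α; β, 0]‖ = max ‖α‖ ‖β‖ * max ‖α‖ ‖β‖ := by
    have : (!![0, α; β, 0])ᴴ * !![0, α; β, 0] = diagonal ![conj β * β, conj α * α] := by
      ext i j; fin_cases i <;> fin_cases j <;> simp [mul_apply, Fin.sum_univ_two]
    rw [← l2_opNorm_conjTranspose_mul_self, this, l2_opNorm_diagonal]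
    simp only [Pi.norm_def]
    rcases le_total ‖α‖ ‖β‖ with h | h <;>
      simp [Fin.univ_succ, RCLike.conj_mul, h, mul_self_le_mul_self (norm_nonneg _) h, sq]
  exact mul_self_inj (norm_nonneg _) (by positivity) |>.1 hsq

lemma Matrix.l2_opNorm_commutator_diagonal_fin_two (d₁ d₂ : 𝕜) (a : Matrix (Fin 2) (Fin 2) 𝕜) :
    ‖diagonal ![d₁, d₂] * a - a * diagonal ![d₁, d₂]‖ = ‖d₁ - d₂‖ * max ‖a 0 1‖ ‖a 1 0‖ := by
  have : diagonal ![d₁, d₂] * a - a * diagonal ![d₁, d₂] =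
      !![0, (d₁ - d₂) * a 0 1; (d₂ - d₁) * a 1 0, 0] := by
    ext i j; fin_cases i <;> fin_cases j <;> simp [mul_apply, Fin.sum_univ_two] <;> ring
  rw [this, l2_opNorm_offDiag_fin_two, norm_mul, norm_mul, norm_sub_rev d₂,
    mul_max_of_nonneg _ _ (norm_nonneg _)]

lemma norm_mul_add_conj_mul_div_two_le {ζ u v : 𝕜} {r : ℝ} (h : max ‖u‖ ‖v‖ ≤ r) :
    ‖(ζ * u + conj ζ * v) / 2‖ ≤ r * ‖ζ‖ := by
  have hu : ‖u‖ ≤ r := (le_max_left _ _).trans h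
  have hv : ‖v‖ ≤ r := (le_max_right _ _).trans h
  calc ‖(ζ * u + conj ζ * v) / 2‖ ≤ (‖ζ‖ * ‖u‖ + ‖ζ‖ * ‖v‖) / 2 := by
        rw [norm_div, RCLike.norm_ofNat]
        gcongr
        simpa only [norm_mul, RCLike.norm_conj] using norm_add_le (ζ * u) (conj ζ * v)
    _ ≤ (‖ζ‖ * r + ‖ζ‖ * r) / 2 := by gcongr
    _ = r * ‖ζ‖ := by ring

lemma norm_mul_max_norm_div_norm_div_le_one (ζ δ : 𝕜) (hδ : δ ≠ 0) :
    ‖δ‖ * max ‖conj ζ / ‖ζ‖ / δ‖ ‖ζ / ‖ζ‖ / δ‖ ≤ 1 := by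
  simp only [norm_div, RCLike.norm_conj, RCLike.norm_ofReal, abs_norm, max_self]
  rw [mul_div_cancel₀ _ (norm_ne_zero_iff.2 hδ)]
  exact div_self_le_one _

lemma mul_add_conj_mul_div_norm_div (ζ δ : 𝕜) :
    (ζ * (conj ζ / ‖ζ‖ / δ) + conj ζ * (ζ / ‖ζ‖ / δ)) / 2 = ‖ζ‖ / δ := by
  rcases eq_or_ne ζ 0 with rfl | hζ
  · simp
  rcases eq_or_ne δ 0 with rfl | hδ
  · simp
  have : (‖ζ‖ : 𝕜) ≠ 0 := by simpa using hζ
  field_simp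
  rw [RCLike.mul_conj]
  ring

end RCLike

def planeCoord (p : ℝ × ℝ × ℝ) : ℂ := ⟨p.1, p.2.1⟩

lemma norm_planeCoord_sub (p p' : ℝ × ℝ × ℝ) :
    ‖planeCoord p - planeCoord p'‖ = √((p.1 - p'.1) ^ 2 + (p.2.1 - p'.2.1) ^ 2) :=
  (dist_eq_norm _ _).symm.trans (Complex.dist_eq_re_im _ _)

lemma trace_densityMat_mul_sub {p p' : ℝ × ℝ × ℝ} (hz : p.2.2 = p'.2.2)
    (a : Matrix (Fin 2) (Fin 2) ℂ) :
    (densityMat p * a).trace - (densityMat p' * a).trace =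
      ((planeCoord p - planeCoord p') * a 0 1
        + conj (planeCoord p - planeCoord p') * a 1 0) / 2 := by
  simp only [trace, densityMat, hz, Complex.ofReal_add, Complex.ofReal_one, Complex.ofReal_sub,
    cons_mul, Nat.succ_eq_add_one, Nat.reduceAdd, empty_mul, Equiv.symm_apply_apply, diag_apply,
    of_apply, cons_val', vecMul, dotProduct, Fin.sum_univ_two, Fin.isValue, cons_val_zero,
    cons_val_one, cons_val_fin_one, planeCoord, Complex.mk_eq_add_mul_I, map_sub, map_add,
    Complex.conj_ofReal, map_mul, Complex.conj_I, mul_neg]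
  ring

theorem m2_same_z_distance_general (d₁ d₂ : ℝ) (hd : d₁ ≠ d₂) (p p' : ℝ × ℝ × ℝ)
    (hz : p.2.2 = p'.2.2) :
    (⨆ a : {a : Matrix (Fin 2) (Fin 2) ℂ // ‖Matrix.toEuclideanCLM (𝕜 := ℂ)
        (Matrix.diagonal ![(d₁ : ℂ), (d₂ : ℂ)] * a
          - a * Matrix.diagonal ![(d₁ : ℂ), (d₂ : ℂ)])‖ ≤ 1},
      ENNReal.ofReal ‖(densityMat p * (a : Matrix (Fin 2) (Fin 2) ℂ)).trace
        - (densityMat p' * (a : Matrix (Fin 2) (Fin 2) ℂ)).trace‖)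
      = ENNReal.ofReal ((1 / |d₁ - d₂|) *
          Real.sqrt ((p.1 - p'.1) ^ 2 + (p.2.1 - p'.2.1) ^ 2)) := by
  have hδ : (d₁ : ℂ) - d₂ ≠ 0 := sub_ne_zero.2 (by exact_mod_cast hd)
  have hnorm_δ : ‖(d₁ : ℂ) - d₂‖ = |d₁ - d₂| := by
    rw [← Complex.ofReal_sub, Complex.norm_real, Real.norm_eq_abs]
  rw [← norm_planeCoord_sub, ← hnorm_δ]
  set ζ := planeCoord p - planeCoord p'
  set δ : ℂ := d₁ - d₂
  refine le_antisymm (iSup_le fun a ↦ ENNReal.ofReal_le_ofReal ?_) ?_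
  · have ha := a.2
    rw [← cstar_norm_def, l2_opNorm_commutator_diagonal_fin_two] at ha
    rw [trace_densityMat_mul_sub hz]
    exact norm_mul_add_conj_mul_div_two_le ((le_div_iff₀' (norm_pos_iff.2 hδ)).2 ha)
  · let a₀ : Matrix (Fin 2) (Fin 2) ℂ := !![0, conj ζ / ‖ζ‖ / δ; ζ / ‖ζ‖ / δ, 0]
    have ha₀ : ‖toEuclideanCLM (𝕜 := ℂ) (diagonal ![(d₁ : ℂ), (d₂ : ℂ)] * a₀
        - a₀ * diagonal ![(d₁ : ℂ), (d₂ : ℂ)])‖ ≤ 1 := by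
      rw [← cstar_norm_def, l2_opNorm_commutator_diagonal_fin_two]
      exact norm_mul_max_norm_div_norm_div_le_one ζ δ hδ
    have hval : (densityMat p * a₀).trace - (densityMat p' * a₀).trace = ‖ζ‖ / δ := by
      rw [trace_densityMat_mul_sub hz]
      exact mul_add_conj_mul_div_norm_div ζ δ
    refine le_iSup_of_le ⟨a₀, ha₀⟩ (le_of_eq ?_)
    rw [Subtype.coe_mk, hval, norm_div, Complex.norm_real, norm_norm, one_div, div_eq_inv_mul]

/-- For `D = diag(d₁,d₂)` with `d₁ ≠ d₂`, two states of `M₂(ℂ)` with the same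
`z`-coordinate in the 3-ball are at spectral distance
`(1/|d₁-d₂|)·√((x̃-x̃')² + (ỹ-ỹ')²)`. -/
theorem m2_same_z_distance (d₁ d₂ : ℝ) (hd : d₁ ≠ d₂) (p p' : ℝ × ℝ × ℝ)
    (hp : p.1 ^ 2 + p.2.1 ^ 2 + p.2.2 ^ 2 ≤ 1) (hp' : p'.1 ^ 2 + p'.2.1 ^ 2 + p'.2.2 ^ 2 ≤ 1)
    (hz : p.2.2 = p'.2.2) :
    (⨆ a : {a : Matrix (Fin 2) (Fin 2) ℂ // ‖Matrix.toEuclideanCLM (𝕜 := ℂ)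
        (Matrix.diagonal ![(d₁ : ℂ), (d₂ : ℂ)] * a
          - a * Matrix.diagonal ![(d₁ : ℂ), (d₂ : ℂ)])‖ ≤ 1},
      ENNReal.ofReal ‖(densityMat p * (a : Matrix (Fin 2) (Fin 2) ℂ)).trace
        - (densityMat p' * (a : Matrix (Fin 2) (Fin 2) ℂ)).trace‖)
      = ENNReal.ofReal ((1 / |d₁ - d₂|) *
          Real.sqrt ((p.1 - p'.1) ^ 2 + (p.2.1 - p'.2.1) ^ 2)) :=
  m2_same_z_distance_general d₁ d₂ hd p p' hz
end

section
/- With A = M₂(ℂ), D = diag(d₁, d₂), d₁ ≠ d₂, acting on ℂ²: two states of M₂(ℂ) with distinct z-coordinates z̃ ≠ z̃' (in the 3-ball parametrization) are at infinite spectral distance. -/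
open scoped ENNReal

/-! The projection `e₁₁` commutes with `D`, so every multiple `t • e₁₁` lies in the Lipschitz
ball, while the two states differ on it by `t (z̃ - z̃') / 2`, which is unbounded in `t`. -/

theorem ENNReal.iSup_ofReal_norm_eq_top_of_forall_smul_mem {𝕜 E F : Type*}
    [NontriviallyNormedField 𝕜] [SMul 𝕜 E] [NormedAddCommGroup F] [NormedSpace 𝕜 F]
    {S : Set E} {f : E → F} {a : E} (hS : ∀ t : 𝕜, t • a ∈ S)
    (hf : ∀ t : 𝕜, f (t • a) = t • f a) (ha : f a ≠ 0) :
    ⨆ x : S, ENNReal.ofReal ‖f x‖ = ⊤ := by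
  refine iSup_eq_top.2 fun b hb => ?_
  obtain ⟨t, ht⟩ := NormedField.exists_lt_norm 𝕜 (b.toReal / ‖f a‖)
  refine ⟨⟨t • a, hS t⟩, ?_⟩
  rw [ENNReal.lt_ofReal_iff_toReal_lt hb.ne, hf, norm_smul]
  exact (div_lt_iff₀ (norm_pos_iff.2 ha)).1 ht

theorem Commute.mul_smul_sub_smul_mul_eq_zero {R A : Type*} [Ring A] [SMul R A]
    [SMulCommClass R A A] [IsScalarTower R A A] {D a : A} (h : Commute D a) (t : R) :
    D * (t • a) - (t • a) * D = 0 :=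
  sub_eq_zero.2 (h.smul_right t).eq

theorem trace_densityMat_mul_single_zero_zero (p : ℝ × ℝ × ℝ) :
    (densityMat p * Matrix.single 0 0 1).trace = ((1 + p.2.2 : ℝ) : ℂ) / 2 := by
  rw [Matrix.trace_mul_single]
  simp [densityMat]

theorem m2_distinct_z_distance_infinite_general (d₁ d₂ : ℝ) (p p' : ℝ × ℝ × ℝ)
    (hz : p.2.2 ≠ p'.2.2) :
    (⨆ a : {a : Matrix (Fin 2) (Fin 2) ℂ // ‖Matrix.toEuclideanCLM (𝕜 := ℂ)
        (Matrix.diagonal ![(d₁ : ℂ), (d₂ : ℂ)] * a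
          - a * Matrix.diagonal ![(d₁ : ℂ), (d₂ : ℂ)])‖ ≤ 1},
      ENNReal.ofReal ‖(densityMat p * (a : Matrix (Fin 2) (Fin 2) ℂ)).trace
        - (densityMat p' * (a : Matrix (Fin 2) (Fin 2) ℂ)).trace‖) = ⊤ := by
  have hcomm : Commute (Matrix.diagonal ![(d₁ : ℂ), (d₂ : ℂ)]) (Matrix.single 0 0 1) := by
    rw [← Matrix.diagonal_single]
    exact Matrix.commute_diagonal _ _
  refine ENNReal.iSup_ofReal_norm_eq_top_of_forall_smul_mem (𝕜 := ℂ)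
    (f := fun a => (densityMat p * a).trace - (densityMat p' * a).trace)
    (a := Matrix.single 0 0 1) (fun t => ?_) (fun t => ?_) ?_
  · change ‖_‖ ≤ 1
    rw [hcomm.mul_smul_sub_smul_mul_eq_zero, map_zero, norm_zero]
    exact zero_le_one
  · simp only [Matrix.mul_smul, Matrix.trace_smul, smul_sub]
  · rw [trace_densityMat_mul_single_zero_zero, trace_densityMat_mul_single_zero_zero,
      ← sub_div, ← Complex.ofReal_sub, div_ne_zero_iff]
    exact ⟨Complex.ofReal_ne_zero.2 fun h => hz (by linarith), two_ne_zero⟩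

/-- For `D = diag(d₁,d₂)` with `d₁ ≠ d₂`, two states of `M₂(ℂ)` with distinct
`z`-coordinates in the 3-ball are at infinite spectral distance. -/
theorem m2_distinct_z_distance_infinite (d₁ d₂ : ℝ) (hd : d₁ ≠ d₂) (p p' : ℝ × ℝ × ℝ)
    (hp : p.1 ^ 2 + p.2.1 ^ 2 + p.2.2 ^ 2 ≤ 1) (hp' : p'.1 ^ 2 + p'.2.1 ^ 2 + p'.2.2 ^ 2 ≤ 1)
    (hz : p.2.2 ≠ p'.2.2) :
    (⨆ a : {a : Matrix (Fin 2) (Fin 2) ℂ // ‖Matrix.toEuclideanCLM (𝕜 := ℂ)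
        (Matrix.diagonal ![(d₁ : ℂ), (d₂ : ℂ)] * a
          - a * Matrix.diagonal ![(d₁ : ℂ), (d₂ : ℂ)])‖ ≤ 1},
      ENNReal.ofReal ‖(densityMat p * (a : Matrix (Fin 2) (Fin 2) ℂ)).trace
        - (densityMat p' * (a : Matrix (Fin 2) (Fin 2) ℂ)).trace‖) = ⊤ :=
  m2_distinct_z_distance_infinite_general d₁ d₂ p p' hz
end
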